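/- arXiv:2009.05251 — 2 statements merged into one kernel-verified Lean document; each statement's English description precedes it below -/
import Mathlib

section
/- Suppose $S_1(T) = \int_0^T S(t)\,dt$ satisfies $|S_1(T) - c| \le A_0 + A_1 \log T$ for all $T \ge 2\pi$ with constants $c$, $A_0, A_1 \ge 0$. Then for all $T \ge 2\pi$, $\big| \int_T^{\infty} \frac{S(t)}{t^2}\,dt \big| \le \frac{2A_0 + 0.5 A_1 + 2A_1 \log T}{T^2}$. -/
/-!
Writing `1 / t² = ∫_t^∞ 2 / u³ du` and swapping the order of integration over `T < t ≤ u` gives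
`∫_T^∞ S(t) / t² dt = ∫_T^∞ (S₁(u) - S₁(T)) · 2 / u³ du`, which is the integration by parts of the
paper without differentiating `S₁`. As `|S₁(u) - S₁(T)| ≤ (A₀ + A₁ log T) + (A₀ + A₁ log u)`,
the tail is at most `∫_T^∞ 2 (2A₀ + A₁ log T + A₁ log u) / u³ du`, computed with the antiderivative
`-(a + b/2 + b log u) / u²` of `2 (a + b log u) / u³`. The same integral bounds the right-hand side
from below by `0`, which settles the case where `S(t) / t²` is not integrable and the Bochner
integral is `0`.
-/
open Real Filter MeasureTheory Set

noncomputable section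

open Classical in
/-- The multiplicity of `ρ` as a zero of the Riemann zeta function. -/
def zetaMult (ρ : ℂ) : ℕ :=
  if h : AnalyticAt ℂ riemannZeta ρ then (analyticOrderAt riemannZeta ρ).toNat else 0

/-- The nontrivial zeros of the Riemann zeta function. -/
def zetaZeros : Set ℂ := {ρ | riemannZeta ρ = 0 ∧ 0 < ρ.re ∧ ρ.re < 1}

/-- The set `𝓕` of positive ordinates of nontrivial zeros of zeta. -/
def zetaOrdinates : Set ℝ := {t | 0 < t ∧ ∃ ρ ∈ zetaZeros, ρ.im = t}

/-- `G T = ∑_{0 < γ ≤ T} 1/γ`, with multiplicity. -/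
def G (T : ℝ) : ℝ :=
  ∑' ρ : {ρ : ℂ // ρ ∈ zetaZeros ∧ 0 < ρ.im ∧ ρ.im ≤ T}, (zetaMult ρ : ℝ) / ρ.1.im

/-- `N T`: number of nontrivial zeros with ordinate in `(0, T]`, with multiplicity. -/
def Ncount (T : ℝ) : ℝ :=
  ∑' ρ : {ρ : ℂ // ρ ∈ zetaZeros ∧ 0 < ρ.im ∧ ρ.im ≤ T}, (zetaMult ρ : ℝ)

/-- The smooth approximation `L T`. -/
def Lsmooth (T : ℝ) : ℝ := T / (2 * π) * (Real.log (T / (2 * π)) - 1) + 7 / 8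

/-- `Q = N - L`. -/
def Q (T : ℝ) : ℝ := Ncount T - Lsmooth T

open scoped Topology

lemma hasDerivAt_neg_add_mul_log_div_sq (a b : ℝ) {x : ℝ} (hx : x ≠ 0) :
    HasDerivAt (fun u => -((a + b / 2 + b * log u) / u ^ 2)) (2 * (a + b * log x) / x ^ 3) x := by
  have hnum : HasDerivAt (fun u => a + b / 2 + b * log u) (b * x⁻¹) x :=
    ((hasDerivAt_log hx).const_mul b).const_add _
  have hden : HasDerivAt (fun u : ℝ => u ^ 2) (2 * x) x := by simpa using hasDerivAt_pow 2 x
  refine (hnum.div hden (pow_ne_zero 2 hx)).neg.congr_deriv ?_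
  field_simp
  ring

lemma tendsto_add_mul_log_div_sq_atTop (a b : ℝ) :
    Tendsto (fun u => (a + b * log u) / u ^ 2) atTop (𝓝 0) := by
  have hlog : Tendsto (fun u => log u / u ^ 2) atTop (𝓝 0) := by
    simpa using (isLittleO_log_rpow_atTop two_pos).tendsto_div_nhds_zero
  have hconst : Tendsto (fun u : ℝ => a / u ^ 2) atTop (𝓝 0) :=
    tendsto_const_nhds.div_atTop (tendsto_pow_atTop two_ne_zero)
  simpa [add_div, mul_div_assoc] using hconst.add (hlog.const_mul b)

section LogCube

variable {a b T : ℝ}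

lemma add_mul_log_div_cube_nonneg (hT : 0 < T) (h : ∀ u ∈ Ioi T, 0 ≤ a + b * log u) :
    ∀ u ∈ Ioi T, 0 ≤ 2 * (a + b * log u) / u ^ 3 := fun u hu => by
  have hu₀ : 0 < u := hT.trans hu
  have := h u hu
  positivity

lemma integrableOn_Ioi_add_mul_log_div_cube (hT : 0 < T)
    (h : ∀ u ∈ Ioi T, 0 ≤ a + b * log u) :
    IntegrableOn (fun u => 2 * (a + b * log u) / u ^ 3) (Ioi T) :=
  integrableOn_Ioi_deriv_of_nonneg'
    (fun _ hx => hasDerivAt_neg_add_mul_log_div_sq a b (hT.trans_le hx).ne')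
    (add_mul_log_div_cube_nonneg hT h) (tendsto_add_mul_log_div_sq_atTop _ b).neg

lemma integral_Ioi_add_mul_log_div_cube (hT : 0 < T)
    (h : ∀ u ∈ Ioi T, 0 ≤ a + b * log u) :
    ∫ u in Ioi T, 2 * (a + b * log u) / u ^ 3 = (a + b / 2 + b * log T) / T ^ 2 := by
  rw [integral_Ioi_of_hasDerivAt_of_nonneg'
    (fun _ hx => hasDerivAt_neg_add_mul_log_div_sq a b (hT.trans_le hx).ne')
    (add_mul_log_div_cube_nonneg hT h) (tendsto_add_mul_log_div_sq_atTop _ b).neg]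
  ring

lemma integrableOn_Ioi_two_div_cube (hT : 0 < T) :
    IntegrableOn (fun u => 2 / u ^ 3) (Ioi T) := by
  simpa using integrableOn_Ioi_add_mul_log_div_cube (a := 1) (b := 0) hT (by simp)

lemma integral_Ioi_two_div_cube (hT : 0 < T) : ∫ u in Ioi T, 2 / u ^ 3 = 1 / T ^ 2 := by
  simpa using integral_Ioi_add_mul_log_div_cube (a := 1) (b := 0) hT (by simp)

end LogCube

lemma setIntegral_Ioi_indicator_Ici {f : ℝ → ℝ} {T t : ℝ} (ht : T < t) :
    ∫ u in Ioi T, (Ici t).indicator f u = ∫ u in Ioi t, f u := by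
  rw [integral_indicator measurableSet_Ici, Measure.restrict_restrict measurableSet_Ici,
    inter_eq_left.2 (Ici_subset_Ioi.2 ht), integral_Ici_eq_integral_Ioi]

theorem integral_Ioi_mul_integral_Ioi_eq {f g : ℝ → ℝ} {T : ℝ} (hf : LocallyIntegrable f)
    (hg : IntegrableOn g (Ioi T)) (hg₀ : ∀ u ∈ Ioi T, 0 ≤ g u)
    (hfg : IntegrableOn (fun t => f t * ∫ u in Ioi t, g u) (Ioi T)) :
    ∫ t in Ioi T, f t * ∫ u in Ioi t, g u = ∫ u in Ioi T, (∫ t in Ioc T u, f t) * g u := by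
  set F : ℝ × ℝ → ℝ := {p | p.1 ≤ p.2}.indicator fun p => f p.1 * g p.2
  have hF_fst (t u : ℝ) : F (t, u) = (Ici t).indicator (fun u => f t * g u) u := by
    by_cases h : t ≤ u <;> simp [F, h]
  have hF_snd (t u : ℝ) : F (t, u) = (Iic u).indicator (fun t => f t * g u) t := by
    by_cases h : t ≤ u <;> simp [F, h]
  have hF_meas :
      AEStronglyMeasurable F ((volume.restrict (Ioi T)).prod (volume.restrict (Ioi T))) :=
    (hf.aestronglyMeasurable.restrict.comp_fst.mul hg.aestronglyMeasurable.comp_snd).indicator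
      (measurableSet_le measurable_fst measurable_snd)
  have hF_int : Integrable F ((volume.restrict (Ioi T)).prod (volume.restrict (Ioi T))) := by
    refine (integrable_prod_iff hF_meas).2 ⟨.of_forall fun t => ?_, hfg.norm.congr ?_⟩
    · simpa only [hF_fst] using (hg.const_mul (f t)).indicator measurableSet_Ici
    · filter_upwards [ae_restrict_mem measurableSet_Ioi] with t ht
      have hg₀' : ∀ u ∈ Ioi t, 0 ≤ g u := fun u hu => hg₀ u (mem_Ioi.2 (ht.trans hu))
      calc ‖f t * ∫ u in Ioi t, g u‖ = ∫ u in Ioi t, ‖f t * g u‖ := by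
            rw [norm_mul, norm_of_nonneg (setIntegral_nonneg measurableSet_Ioi hg₀'),
              ← integral_const_mul]
            refine setIntegral_congr_fun measurableSet_Ioi fun u hu => ?_
            rw [norm_mul, norm_of_nonneg (hg₀' u hu)]
        _ = ∫ u in Ioi T, ‖F (t, u)‖ := by
            simp only [hF_fst, norm_indicator_eq_indicator_norm]
            exact (setIntegral_Ioi_indicator_Ici ht).symm
  calc ∫ t in Ioi T, f t * ∫ u in Ioi t, g u = ∫ t in Ioi T, ∫ u in Ioi T, F (t, u) := by
        refine setIntegral_congr_fun measurableSet_Ioi fun t ht => ?_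
        simp only [hF_fst, setIntegral_Ioi_indicator_Ici ht, integral_const_mul]
    _ = ∫ u in Ioi T, ∫ t in Ioi T, F (t, u) := integral_integral_swap hF_int
    _ = ∫ u in Ioi T, (∫ t in Ioc T u, f t) * g u := by
        refine setIntegral_congr_fun measurableSet_Ioi fun u _ => ?_
        simp only [hF_snd, integral_indicator measurableSet_Iic,
          Measure.restrict_restrict measurableSet_Iic, Iic_inter_Ioi, integral_mul_const]

theorem integral_Ioi_div_sq_eq {f : ℝ → ℝ} {T : ℝ} (hf : LocallyIntegrable f) (hT : 0 < T)
    (hfT : IntegrableOn (fun t => f t / t ^ 2) (Ioi T)) :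
    ∫ t in Ioi T, f t / t ^ 2 = ∫ u in Ioi T, (∫ t in Ioc T u, f t) * (2 / u ^ 3) := by
  have hkernel : ∀ t ∈ Ioi T, f t / t ^ 2 = f t * ∫ u in Ioi t, 2 / u ^ 3 := fun t ht => by
    rw [integral_Ioi_two_div_cube (hT.trans ht), div_eq_mul_one_div]
  rw [setIntegral_congr_fun measurableSet_Ioi hkernel]
  refine integral_Ioi_mul_integral_Ioi_eq hf (integrableOn_Ioi_two_div_cube hT) (fun u hu => ?_)
    (hfT.congr_fun hkernel measurableSet_Ioi)
  have : 0 < u := hT.trans hu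
  positivity

lemma setIntegral_Ioc_eq_sub {f : ℝ → ℝ} {a b c : ℝ} (hf : LocallyIntegrable f) (hab : a ≤ b)
    (hbc : b ≤ c) : ∫ t in Ioc b c, f t = (∫ t in Ioc a c, f t) - ∫ t in Ioc a b, f t := by
  have hint (x y : ℝ) : IntegrableOn f (Ioc x y) :=
    (hf.integrableOn_isCompact isCompact_Icc).mono_set Ioc_subset_Icc_self
  have h := setIntegral_union (Ioc_disjoint_Ioc_of_le le_rfl) measurableSet_Ioc
    (hint a b) (hint b c)
  rw [Ioc_union_Ioc_eq_Ioc hab hbc] at h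
  linarith

theorem tail_integral_S_bound_general (S : ℝ → ℝ) (hS : LocallyIntegrable S)
    (c A₀ A₁ : ℝ)
    (hS₁ : ∀ T : ℝ, 2 * π ≤ T → |(∫ t in Ioc (0:ℝ) T, S t) - c| ≤ A₀ + A₁ * Real.log T) :
    ∀ T : ℝ, 2 * π ≤ T →
      |∫ t in Ioi T, S t / t ^ 2| ≤ (2 * A₀ + 0.5 * A₁ + 2 * A₁ * Real.log T) / T ^ 2 := by
  intro T hT
  have hT₀ : 0 < T := (by positivity : 0 < 2 * π).trans_le hT
  have hS_Ioc : ∀ u ∈ Ioi T, |∫ t in Ioc T u, S t| ≤ (2 * A₀ + A₁ * log T) + A₁ * log u :=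
    fun u hu => by
      rw [setIntegral_Ioc_eq_sub hS hT₀.le hu.le]
      have := abs_sub ((∫ t in Ioc 0 u, S t) - c) ((∫ t in Ioc 0 T, S t) - c)
      rw [sub_sub_sub_cancel_right] at this
      linarith [hS₁ T hT, hS₁ u (hT.trans hu.le)]
  have hbound_nonneg : ∀ u ∈ Ioi T, 0 ≤ (2 * A₀ + A₁ * log T) + A₁ * log u :=
    fun u hu => (abs_nonneg _).trans (hS_Ioc u hu)
  have hRHS : (2 * A₀ + 0.5 * A₁ + 2 * A₁ * Real.log T) / T ^ 2
      = ∫ u in Ioi T, 2 * ((2 * A₀ + A₁ * log T) + A₁ * log u) / u ^ 3 := by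
    rw [integral_Ioi_add_mul_log_div_cube hT₀ hbound_nonneg]
    ring
  rw [hRHS]
  by_cases hint : IntegrableOn (fun t => S t / t ^ 2) (Ioi T)
  · rw [integral_Ioi_div_sq_eq hS hT₀ hint, ← norm_eq_abs]
    refine norm_integral_le_of_norm_le (integrableOn_Ioi_add_mul_log_div_cube hT₀ hbound_nonneg)
      ((ae_restrict_mem measurableSet_Ioi).mono fun u hu => ?_)
    have : 0 < u := hT₀.trans hu
    rw [norm_mul, norm_of_nonneg (by positivity : (0 : ℝ) ≤ 2 / u ^ 3), norm_eq_abs]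
    calc |∫ t in Ioc T u, S t| * (2 / u ^ 3)
        ≤ ((2 * A₀ + A₁ * log T) + A₁ * log u) * (2 / u ^ 3) := by gcongr; exact hS_Ioc u hu
      _ = _ := by ring
  · rw [integral_undef hint, abs_zero]
    exact setIntegral_nonneg measurableSet_Ioi (add_mul_log_div_cube_nonneg hT₀ hbound_nonneg)

/-- If `S₁(T) = ∫₀^T S` satisfies `|S₁(T) - c| ≤ A₀ + A₁ log T` for `T ≥ 2π`, then
`|∫_T^∞ S(t)/t² dt| ≤ (2A₀ + 0.5A₁ + 2A₁ log T)/T²` for `T ≥ 2π`. -/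
theorem tail_integral_S_bound (S : ℝ → ℝ) (hS : LocallyIntegrable S)
    (c A₀ A₁ : ℝ) (hA₀ : 0 ≤ A₀) (hA₁ : 0 ≤ A₁)
    (hS₁ : ∀ T : ℝ, 2 * π ≤ T → |(∫ t in Ioc (0:ℝ) T, S t) - c| ≤ A₀ + A₁ * Real.log T) :
    ∀ T : ℝ, 2 * π ≤ T →
      |∫ t in Ioi T, S t / t ^ 2| ≤ (2 * A₀ + 0.5 * A₁ + 2 * A₁ * Real.log T) / T ^ 2 :=
  tail_integral_S_bound_general S hS c A₀ A₁ hS₁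
end
end

section
/- For $T \ge 2\pi$, the tail $E_2(T) = \int_T^{\infty} \frac{Q(t)}{t^2}\,dt$ satisfies $|E_2(T)| \le \frac{4.27 + 0.12 \log T}{T^2}$. -/
/-!
Split `Q = S + (Q - S)`. The error `|Q - S| ≤ 0.2 / t` contributes at most
`∫_T^∞ 0.2 t⁻³ = 0.1 / T²`. For `S`, integrate by parts against `t⁻²`: with
`F u = ∫_T^u S = S₁ u - S₁ T`, bounded by `|S₁ u - c| + |S₁ T - c| ≤ K + a log u`,
`∫_T^R S t⁻² = F R / R² + ∫_T^R 2 F u / u³`. Since `-(K + a/2 + a log u) / u²` is an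
antiderivative of `(K + a log u) · 2 / u³`, the boundary term cancels up to `-a / (2 R²) ≤ 0`,
leaving a bound uniform in `R`; let `R → ∞`. If `Q t / t²` is not integrable on `(T, ∞)`, the
Bochner integral is `0` and the bound is trivial.
-/

open Real Filter MeasureTheory Set

noncomputable section

theorem integral_mul_eq_sub_integral_primitive_mul_deriv {f g : ℝ → ℝ} {a b : ℝ}
    (hf : IntervalIntegrable f volume a b) (hg : ContDiffOn ℝ 1 g (uIcc a b)) :
    ∫ x in a..b, f x * g x =
      (∫ x in a..b, f x) * g b - ∫ x in a..b, (∫ t in a..x, f t) * deriv g x := by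
  have hF := hf.absolutelyContinuousOnInterval_intervalIntegral (c := a) left_mem_uIcc
  have hderiv : ∫ x in a..b, deriv (fun x => ∫ t in a..x, f t) x * g x =
      ∫ x in a..b, f x * g x := by
    refine intervalIntegral.integral_congr_ae ?_
    filter_upwards [hf.ae_hasDerivAt_integral] with x hx hxab
    rw [(hx (uIoc_subset_uIcc hxab) a left_mem_uIcc).deriv]
  rw [hF.integral_mul_deriv_eq_deriv_mul hg.absolutelyContinuousOnInterval, hderiv,
    intervalIntegral.integral_same, zero_mul, sub_zero]
  ring

theorem uIcc_subset_Ioi {α : Type*} [LinearOrder α] {a b c : α} (ha : c < a) (hb : c < b) :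
    uIcc a b ⊆ Ioi c := fun _ hx => (lt_min ha hb).trans_le hx.1

theorem hasDerivAt_neg_add_log_div_sq (K a : ℝ) {x : ℝ} (hx : 0 < x) :
    HasDerivAt (fun u => -((K + a / 2 + a * log u) / u ^ 2))
      ((K + a * log x) * (2 / x ^ 3)) x := by
  have hlog := ((hasDerivAt_log hx.ne').const_mul a).const_add (K + a / 2)
  refine ((hlog.div (hasDerivAt_pow 2 x) (by positivity)).neg).congr_deriv ?_
  field_simp
  ring

theorem continuousOn_add_log_mul_two_div_cube (K a : ℝ) :
    ContinuousOn (fun u => (K + a * log u) * (2 / u ^ 3)) (Ioi 0) := fun x hx =>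
  have : x ≠ 0 := ne_of_gt hx
  ContinuousAt.continuousWithinAt (by fun_prop (disch := positivity))

theorem integral_add_log_mul_two_div_cube (K a : ℝ) {T R : ℝ} (hT : 0 < T) (hR : 0 < R) :
    ∫ u in T..R, (K + a * log u) * (2 / u ^ 3) =
      (K + a / 2 + a * log T) / T ^ 2 - (K + a / 2 + a * log R) / R ^ 2 := by
  have hpos : uIcc T R ⊆ Ioi 0 := uIcc_subset_Ioi hT hR
  rw [intervalIntegral.integral_eq_sub_of_hasDerivAt
    (fun x hx => hasDerivAt_neg_add_log_div_sq K a (hpos hx))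
    ((continuousOn_add_log_mul_two_div_cube K a).mono hpos).intervalIntegrable]
  ring

theorem abs_integral_div_sq_le_of_abs_le_div {f : ℝ → ℝ} {T R C : ℝ} (hT : 0 < T)
    (hTR : T ≤ R) (hC : 0 ≤ C) (hf : ∀ t ∈ Ioc T R, |f t| ≤ C / t) :
    |∫ t in T..R, f t / t ^ 2| ≤ C / 2 / T ^ 2 := by
  have hpos : uIcc T R ⊆ Ioi 0 := uIcc_subset_Ioi hT (hT.trans_le hTR)
  have hpointwise : ∀ t ∈ Ioc T R, ‖f t / t ^ 2‖ ≤ (C / 2 + 0 * log t) * (2 / t ^ 3) := by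
    intro t ht
    have ht0 : 0 < t := hT.trans ht.1
    calc ‖f t / t ^ 2‖ = |f t| / t ^ 2 := by
          rw [norm_div, norm_pow, Real.norm_eq_abs, Real.norm_of_nonneg ht0.le]
      _ ≤ C / t / t ^ 2 := by gcongr; exact hf t ht
      _ = (C / 2 + 0 * log t) * (2 / t ^ 3) := by field_simp; ring
  have hbound := intervalIntegral.norm_integral_le_of_norm_le (μ := volume) hTR
    (Eventually.of_forall hpointwise)
    ((continuousOn_add_log_mul_two_div_cube (C / 2) 0).mono hpos).intervalIntegrable
  rw [integral_add_log_mul_two_div_cube _ _ hT (hT.trans_le hTR)] at hbound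
  simp only [zero_div, zero_mul, add_zero] at hbound
  have : 0 ≤ C / 2 / R ^ 2 := by positivity
  rw [← Real.norm_eq_abs]
  linarith

theorem abs_integral_div_sq_le_of_abs_primitive_le {S : ℝ → ℝ} {T R K a : ℝ} (hT : 0 < T)
    (hTR : T ≤ R) (ha : 0 ≤ a) (hS : IntervalIntegrable S volume T R)
    (hF : ∀ u ∈ Icc T R, |∫ t in T..u, S t| ≤ K + a * log u) :
    |∫ t in T..R, S t / t ^ 2| ≤ (K + a / 2 + a * log T) / T ^ 2 := by
  have hpos : uIcc T R ⊆ Ioi 0 := uIcc_subset_Ioi hT (hT.trans_le hTR)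
  have hR : 0 < R := hT.trans_le hTR
  have hg : ContDiffOn ℝ 1 (fun t : ℝ => (t ^ 2)⁻¹) (uIcc T R) :=
    ContDiffOn.inv (by fun_prop) fun x hx => (pow_pos (hpos hx) 2).ne'
  have hg' : EqOn (fun u => (∫ t in T..u, S t) * deriv (fun t : ℝ => (t ^ 2)⁻¹) u)
      (fun u => -((∫ t in T..u, S t) * (2 / u ^ 3))) (uIcc T R) := fun u hu => by
    have hu0 : u ≠ 0 := (hpos hu).ne'
    have hd : HasDerivAt (fun t : ℝ => (t ^ 2)⁻¹) _ u :=
      (hasDerivAt_pow 2 u).inv (pow_ne_zero 2 hu0)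
    simp only [hd.deriv]
    field_simp
    ring
  have hparts : ∫ t in T..R, S t / t ^ 2 =
      (∫ t in T..R, S t) / R ^ 2 + ∫ u in T..R, (∫ t in T..u, S t) * (2 / u ^ 3) := by
    simp_rw [div_eq_mul_inv (S _)]
    rw [integral_mul_eq_sub_integral_primitive_mul_deriv hS hg, intervalIntegral.integral_congr hg',
      intervalIntegral.integral_neg]
    ring
  have hboundary : |(∫ t in T..R, S t) / R ^ 2| ≤ (K + a * log R) / R ^ 2 := by
    rw [abs_div, abs_of_pos (by positivity : (0 : ℝ) < R ^ 2)]
    gcongr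
    exact hF R ⟨hTR, le_rfl⟩
  have hbulk : |∫ u in T..R, (∫ t in T..u, S t) * (2 / u ^ 3)| ≤
      (K + a / 2 + a * log T) / T ^ 2 - (K + a / 2 + a * log R) / R ^ 2 := by
    rw [← integral_add_log_mul_two_div_cube K a hT hR, ← Real.norm_eq_abs]
    refine intervalIntegral.norm_integral_le_of_norm_le hTR
      (Eventually.of_forall fun u hu => ?_)
      ((continuousOn_add_log_mul_two_div_cube K a).mono hpos).intervalIntegrable
    have hu0 : 0 < u := hT.trans hu.1
    rw [norm_mul, Real.norm_eq_abs, Real.norm_of_nonneg (by positivity)]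
    gcongr
    exact hF u (Ioc_subset_Icc_self hu)
  have hRa : 0 ≤ a / 2 / R ^ 2 := by positivity
  calc |∫ t in T..R, S t / t ^ 2|
      ≤ |(∫ t in T..R, S t) / R ^ 2| + |∫ u in T..R, (∫ t in T..u, S t) * (2 / u ^ 3)| := by
        rw [hparts]; exact abs_add_le _ _
    _ ≤ (K + a / 2 + a * log T) / T ^ 2 - a / 2 / R ^ 2 := by
        have : (K + a * log R) / R ^ 2 - (K + a / 2 + a * log R) / R ^ 2 = - (a / 2 / R ^ 2) := by
          ring
        linarith
    _ ≤ (K + a / 2 + a * log T) / T ^ 2 := by linarith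

theorem abs_intervalIntegral_le_of_abs_integral_Ioc_sub_le {S : ℝ → ℝ} {c T u B₁ B₂ : ℝ}
    (hS : LocallyIntegrable S) (hT : 0 ≤ T) (hu : T ≤ u)
    (hT' : |(∫ t in Ioc 0 T, S t) - c| ≤ B₁) (hu' : |(∫ t in Ioc 0 u, S t) - c| ≤ B₂) :
    |∫ t in T..u, S t| ≤ B₁ + B₂ := by
  have hSi (x : ℝ) : IntervalIntegrable S volume 0 x :=
    (hS.integrableOn_isCompact isCompact_uIcc).intervalIntegrable
  have hsplit : ∫ t in T..u, S t =
      ((∫ t in Ioc 0 u, S t) - c) - ((∫ t in Ioc 0 T, S t) - c) := by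
    rw [← intervalIntegral.integral_of_le hT, ← intervalIntegral.integral_of_le (hT.trans hu),
      ← intervalIntegral.integral_interval_sub_left (hSi u) (hSi T)]
    ring
  rw [hsplit]
  linarith [abs_sub ((∫ t in Ioc 0 u, S t) - c) ((∫ t in Ioc 0 T, S t) - c)]

theorem abs_integral_div_sq_le_of_abs_sub_le_div {f S : ℝ → ℝ} {T R C K a : ℝ} (hT : 0 < T)
    (hTR : T ≤ R) (hC : 0 ≤ C) (ha : 0 ≤ a)
    (hf : IntervalIntegrable (fun t => f t / t ^ 2) volume T R)
    (hS : IntervalIntegrable S volume T R) (hfS : ∀ t ∈ Ioc T R, |f t - S t| ≤ C / t)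
    (hF : ∀ u ∈ Icc T R, |∫ t in T..u, S t| ≤ K + a * log u) :
    |∫ t in T..R, f t / t ^ 2| ≤ (C / 2 + (K + a / 2 + a * log T)) / T ^ 2 := by
  have hS' : IntervalIntegrable (fun t => S t / t ^ 2) volume T R := by
    simp_rw [div_eq_mul_inv]
    refine hS.mul_continuousOn (ContinuousOn.inv₀ (by fun_prop) fun x hx => ?_)
    exact (pow_pos (uIcc_subset_Ioi hT (hT.trans_le hTR) hx) 2).ne'
  have hsplit : ∫ t in T..R, f t / t ^ 2 =
      (∫ t in T..R, (f t - S t) / t ^ 2) + ∫ t in T..R, S t / t ^ 2 := by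
    simp_rw [sub_div]
    rw [intervalIntegral.integral_sub hf hS']
    ring
  rw [hsplit, add_div]
  exact (abs_add_le _ _).trans (add_le_add (abs_integral_div_sq_le_of_abs_le_div hT hTR hC hfS)
    (abs_integral_div_sq_le_of_abs_primitive_le hT hTR ha hS hF))

/-- Lemma 2: for `T ≥ 2π`, `|E₂(T)| = |∫_T^∞ Q(t)/t² dt| ≤ (4.27 + 0.12 log T)/T²`,
assuming the explicit bounds of Trudgian relating `Q` to `S` and bounding `S₁`. -/
theorem E2_bound (S : ℝ → ℝ) (hS : LocallyIntegrable S) (c : ℝ)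
    (hQS : ∀ t : ℝ, 2 * π ≤ t → |Q t - S t| ≤ 0.2 / t)
    (hS₁ : ∀ T : ℝ, 2 * π ≤ T →
      |(∫ t in Ioc (0:ℝ) T, S t) - c| ≤ 2.067 + 0.059 * Real.log T) :
    ∀ T : ℝ, 2 * π ≤ T →
      |∫ t in Ioi T, Q t / t ^ 2| ≤ (4.27 + 0.12 * Real.log T) / T ^ 2 := by
  intro T hT
  have hT0 : 0 < T := by linarith [pi_pos]
  have hlogT : 0 ≤ log T := log_nonneg (by linarith [pi_gt_three])
  by_cases hQi : IntegrableOn (fun t => Q t / t ^ 2) (Ioi T)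
  swap
  · rw [integral_undef hQi, abs_zero]; positivity
  refine le_of_tendsto ((intervalIntegral_tendsto_integral_Ioi T hQi tendsto_id).abs) ?_
  filter_upwards [eventually_ge_atTop T] with R hR
  have hbound := abs_integral_div_sq_le_of_abs_sub_le_div (C := 0.2)
    (K := 2.067 + 0.059 * log T + 2.067) (a := 0.059) hT0 hR (by norm_num) (by norm_num)
    ((intervalIntegrable_iff_integrableOn_Ioc_of_le hR).2 (hQi.mono_set Ioc_subset_Ioi_self))
    (hS.integrableOn_isCompact isCompact_uIcc).intervalIntegrable
    (fun t ht => hQS t (hT.trans ht.1.le)) fun u hu => by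
      linarith [abs_intervalIntegral_le_of_abs_integral_Ioc_sub_le hS hT0.le hu.1
        (hS₁ T hT) (hS₁ u (hT.trans hu.1))]
  exact hbound.trans (div_le_div_of_nonneg_right (by linarith) (by positivity))
end
end
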